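/- arXiv:1205.0963 — 2 statements merged into one kernel-verified Lean document; each statement's English description precedes it below -/
import Mathlib

section
/- A convex corner cannot be a foot of perpendicularity from outside: with notation as above, if the interior angle of the path at g on the side containing a is strictly less than π (i.e., angle u₁ u₂ < π measured through the side of a), then g cannot be a closest point of the path to a. -/
/-!
Write `a - g = s u₁ + t u₂` with `s, t > 0`. Since the corner is convex, `⟪u₁, u₂⟫ > -1`, so
`⟪a - g, u₁ + u₂⟫ = (s + t)(1 + ⟪u₁, u₂⟫) > 0` and `a - g` makes an acute angle with one of
the edges. Moving from `g` a short distance along that edge brings us closer to `a`.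
-/

open InnerProductGeometry

section

variable {V : Type*} [NormedAddCommGroup V] [InnerProductSpace ℝ V]

lemma neg_one_lt_inner_of_angle_lt_pi {u₁ u₂ : V} (h₁ : ‖u₁‖ = 1) (h₂ : ‖u₂‖ = 1)
    (hang : angle u₁ u₂ < Real.pi) : -1 < inner ℝ u₁ u₂ := by
  have hne₁ : u₁ ≠ 0 := norm_ne_zero_iff.mp (by simp [h₁])
  have hne₂ : u₂ ≠ 0 := norm_ne_zero_iff.mp (by simp [h₂])
  have hge : -1 ≤ inner ℝ u₁ u₂ := by
    simpa [h₁, h₂] using neg_le_of_abs_le (abs_real_inner_le_norm u₁ u₂)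
  refine hge.lt_of_ne fun heq => hang.ne ?_
  exact (inner_eq_neg_mul_norm_iff_angle_eq_pi hne₁ hne₂).mp (by simp [h₁, h₂, heq])

lemma inner_smul_add_smul_add_pos {u₁ u₂ : V} (h₁ : ‖u₁‖ = 1) (h₂ : ‖u₂‖ = 1)
    (hc : -1 < inner ℝ u₁ u₂) {s t : ℝ} (hs : 0 < s) (ht : 0 < t) :
    0 < inner ℝ (s • u₁ + t • u₂) (u₁ + u₂) := by
  have hexpand : inner ℝ (s • u₁ + t • u₂) (u₁ + u₂) = (s + t) * (1 + inner ℝ u₁ u₂) := by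
    simp only [inner_add_left, inner_add_right, real_inner_smul_left,
      real_inner_self_eq_norm_sq, h₁, h₂, real_inner_comm u₁ u₂]
    ring
  rw [hexpand]
  exact mul_pos (by linarith) (by linarith)

lemma exists_norm_sub_smul_lt_of_inner_pos {x u : V} (hxu : 0 < inner ℝ x u)
    {ε : ℝ} (hε : 0 < ε) : ∃ t : ℝ, 0 < t ∧ t ≤ ε ∧ ‖x - t • u‖ < ‖x‖ := by
  have hu : 0 < ‖u‖ ^ 2 := by
    have : u ≠ 0 := by rintro rfl; simp at hxu
    positivity
  set t := min ε (inner ℝ x u / ‖u‖ ^ 2)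
  have htpos : 0 < t := lt_min hε (div_pos hxu hu)
  have htu : t * ‖u‖ ^ 2 ≤ inner ℝ x u :=
    (le_div_iff₀ hu).mp (min_le_right _ _)
  refine ⟨t, htpos, min_le_left _ _, ?_⟩
  -- `‖x - t u‖² = ‖x‖² - t (2⟪x, u⟫ - t ‖u‖²)`
  have hsq : ‖x - t • u‖ ^ 2 < ‖x‖ ^ 2 := by
    rw [norm_sub_sq_real, real_inner_smul_right, norm_smul, Real.norm_of_nonneg htpos.le]
    nlinarith
  exact lt_of_pow_lt_pow_left₀ 2 (norm_nonneg x) hsq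

lemma exists_dist_add_smul_lt_of_inner_pos {a g u : V} (h : 0 < inner ℝ (a - g) u)
    {ε : ℝ} (hε : 0 < ε) : ∃ t : ℝ, 0 < t ∧ t ≤ ε ∧ dist a (g + t • u) < dist a g := by
  obtain ⟨t, htpos, htε, hlt⟩ := exists_norm_sub_smul_lt_of_inner_pos h hε
  refine ⟨t, htpos, htε, ?_⟩
  rwa [dist_eq_norm, dist_eq_norm, ← sub_sub]

end

/-- A convex corner cannot be the foot of a shortest path from a point in its open
wedge: if `a` lies in the open wedge at `g` spanned by unit edge directions `u₁, u₂`
with `∠(u₁,u₂) < π`, then some point on one of the two edge segments is strictly closer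
to `a` than `g` is. -/
theorem stmt_15 (g a u₁ u₂ : EuclideanSpace ℝ (Fin 2)) (h₁ : ‖u₁‖ = 1) (h₂ : ‖u₂‖ = 1)
    (hang : angle u₁ u₂ < Real.pi)
    (ha : ∃ s t : ℝ, 0 < s ∧ 0 < t ∧ a = g + s • u₁ + t • u₂)
    (ε : ℝ) (hε : 0 < ε) :
    ∃ t : ℝ, 0 < t ∧ t ≤ ε ∧
      (dist a (g + t • u₁) < dist a g ∨ dist a (g + t • u₂) < dist a g) := by
  obtain ⟨s, t, hs, ht, rfl⟩ := ha
  have hsum : 0 < inner ℝ (g + s • u₁ + t • u₂ - g) (u₁ + u₂) := by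
    rw [add_assoc, add_sub_cancel_left]
    exact inner_smul_add_smul_add_pos h₁ h₂ (neg_one_lt_inner_of_angle_lt_pi h₁ h₂ hang) hs ht
  rw [inner_add_right] at hsum
  by_cases hpos : 0 < inner ℝ (g + s • u₁ + t • u₂ - g) u₁
  · obtain ⟨r, hr, hrε, hlt⟩ := exists_dist_add_smul_lt_of_inner_pos hpos hε
    exact ⟨r, hr, hrε, Or.inl hlt⟩
  · obtain ⟨r, hr, hrε, hlt⟩ := exists_dist_add_smul_lt_of_inner_pos (by linarith) hε
    exact ⟨r, hr, hrε, Or.inr hlt⟩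
end

section
/- Non-overlap of fan-joined regions: let q₀, …, q_k be points on a convex polygon Q in the plane (in order), and for each i attach to the edge/arc of Q a region R_i lying in the outward half-plane of that edge, with R_i contained in the outward normal strip over its base. Then distinct regions R_i and R_j have disjoint interiors. -/
/-!
If `x` lies in the normal strips over two edges, write `x = p + s • nᵢ = q + t • nⱼ` with feet
`p`, `q` on the edges. Both feet lie in `K`, which is on the inner side of every edge line, so
`⟪x - p, q - p⟫ ≤ 0` and `⟪x - q, p - q⟫ ≤ 0`; adding them gives `‖p - q‖² ≤ 0`, so the feet
coincide. For `x` in the interior of both strips the common foot lies in the relative interior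
of both edges, which are disjoint.
-/

open RealInnerProductSpace Topology

section NormalStrip

variable {E : Type*} [NormedAddCommGroup E] [InnerProductSpace ℝ E]

def normalStrip (a b n : E) : Set E :=
  {x | ∃ p ∈ segment ℝ a b, ∃ t : ℝ, 0 ≤ t ∧ x = p + t • n}

lemma normalStrip_comm (a b n : E) : normalStrip a b n = normalStrip b a n := by
  simp only [normalStrip, segment_symm]

lemma inner_sub_left_eq_zero_of_mem_segment {a b n p : E} (hline : ⟪b - a, n⟫ = 0)
    (hp : p ∈ segment ℝ a b) : ⟪p - a, n⟫ = 0 := by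
  obtain ⟨u, -, rfl⟩ := (segment_eq_image' ℝ a b).subset hp
  simp [inner_smul_left, hline]

lemma eq_of_add_smul_eq_add_smul {n p p' : E} {t t' : ℝ} (hn : n ≠ 0) (horth : ⟪p - p', n⟫ = 0)
    (heq : p + t • n = p' + t' • n) : p = p' := by
  have hdiff : p - p' = (t' - t) • n := by rw [sub_smul]; linear_combination (norm := module) heq
  have ht : t' - t = 0 := by
    rw [hdiff, inner_smul_left, conj_trivial, mul_eq_zero] at horth
    exact horth.resolve_right (inner_self_ne_zero.mpr hn)
  rwa [ht, zero_smul, sub_eq_zero] at hdiff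

lemma left_add_smul_notMem_interior_normalStrip {a b n : E} (hab : a ≠ b) (hn : n ≠ 0)
    (hline : ⟪b - a, n⟫ = 0) (t : ℝ) : a + t • n ∉ interior (normalStrip a b n) := by
  intro hx
  -- pushing the point slightly past `a` along the edge moves its foot off the edge
  have hshift : ∀ᶠ δ in 𝓝[>] (0 : ℝ), a + t • n + δ • (a - b) ∈ normalStrip a b n := by
    refine (Filter.Tendsto.eventually ?_ (mem_interior_iff_mem_nhds.mp hx)).filter_mono
      nhdsWithin_le_nhds
    have hcont : Continuous fun δ : ℝ => a + t • n + δ • (a - b) := by fun_prop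
    simpa using hcont.tendsto (0 : ℝ)
  obtain ⟨δ, hmem, hδ⟩ := (hshift.and self_mem_nhdsWithin).exists
  obtain ⟨p, hp, t', -, heq⟩ := hmem
  have hfoot : a + δ • (a - b) = p := by
    refine eq_of_add_smul_eq_add_smul hn ?_ (t := t) (t' := t') (by rw [← heq]; abel)
    have : a + δ • (a - b) - p = -(p - a) - δ • (b - a) := by module
    rw [this, inner_sub_left, inner_neg_left, inner_smul_left,
      inner_sub_left_eq_zero_of_mem_segment hline hp, hline]
    simp
  have hline_map : a + δ • (a - b) = AffineMap.lineMap a b (-δ) := by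
    rw [AffineMap.lineMap_apply]; simp only [vsub_eq_sub, vadd_eq_add]; module
  rw [hfoot.symm, hline_map, mem_segment_iff_wbtw, wbtw_lineMap_iff] at hp
  rcases hp with h | h
  · exact hab h
  · linarith [h.1, (hδ : (0 : ℝ) < δ)]

lemma mem_openSegment_of_add_smul_mem_interior_normalStrip {a b n p : E} {t : ℝ} (hab : a ≠ b)
    (hn : n ≠ 0) (hline : ⟪b - a, n⟫ = 0) (hp : p ∈ segment ℝ a b)
    (hx : p + t • n ∈ interior (normalStrip a b n)) : p ∈ openSegment ℝ a b := by
  rw [← insert_endpoints_openSegment] at hp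
  rcases hp with rfl | rfl | hp
  · exact absurd hx (left_add_smul_notMem_interior_normalStrip hab hn hline t)
  · have hline' : ⟪a - p, n⟫ = 0 := by rw [← neg_sub, inner_neg_left, hline, neg_zero]
    rw [normalStrip_comm] at hx
    exact absurd hx (left_add_smul_notMem_interior_normalStrip hab.symm hn hline' t)
  · exact hp

lemma inner_smul_sub_nonpos {a b n p y : E} {t : ℝ} (hline : ⟪b - a, n⟫ = 0)
    (hp : p ∈ segment ℝ a b) (ht : 0 ≤ t) (hy : ⟪y - a, n⟫ ≤ 0) : ⟪t • n, y - p⟫ ≤ 0 := by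
  have hyp : y - p = (y - a) - (p - a) := by abel
  rw [real_inner_smul_left, real_inner_comm, hyp, inner_sub_left,
    inner_sub_left_eq_zero_of_mem_segment hline hp, sub_zero]
  exact mul_nonpos_of_nonneg_of_nonpos ht hy

lemma eq_of_inner_sub_nonpos_of_inner_sub_nonpos {x p q : E} (hp : ⟪x - p, q - p⟫ ≤ 0)
    (hq : ⟪x - q, p - q⟫ ≤ 0) : p = q := by
  have hsum : ⟪q - p, q - p⟫ = ⟪x - p, q - p⟫ + ⟪x - q, p - q⟫ := by
    rw [← neg_sub q p, inner_neg_right, ← sub_eq_add_neg, ← inner_sub_left]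
    congr 1; abel
  have : ⟪q - p, q - p⟫ = 0 := le_antisymm (by linarith) real_inner_self_nonneg
  exact (sub_eq_zero.mp (inner_self_eq_zero.mp this)).symm

end NormalStrip

theorem stmt_16_general {ι : Type*} (K : Set (EuclideanSpace ℝ (Fin 2)))
    (a b : ι → EuclideanSpace ℝ (Fin 2)) (n : ι → EuclideanSpace ℝ (Fin 2))
    (R : ι → Set (EuclideanSpace ℝ (Fin 2)))
    (hedge : ∀ i, segment ℝ (a i) (b i) ⊆ K)
    (hab : ∀ i, a i ≠ b i)
    (hn : ∀ i, ‖n i‖ = 1)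
    (hsupp : ∀ i, ∀ x ∈ K, ⟪x - a i, n i⟫ ≤ 0)
    (hline : ∀ i, ⟪b i - a i, n i⟫ = 0)
    (hdisj : ∀ i j, i ≠ j → openSegment ℝ (a i) (b i) ∩ openSegment ℝ (a j) (b j) = ∅)
    (hR : ∀ i, R i ⊆ {x | ∃ p ∈ segment ℝ (a i) (b i), ∃ t : ℝ, 0 ≤ t ∧ x = p + t • n i}) :
    ∀ i j, i ≠ j → interior (R i) ∩ interior (R j) = ∅ := by
  intro i j hij
  refine Set.eq_empty_iff_forall_notMem.mpr fun x ⟨hxi, hxj⟩ => ?_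
  have hn0 : ∀ k, n k ≠ 0 := fun k => norm_ne_zero_iff.mp (by rw [hn k]; exact one_ne_zero)
  obtain ⟨p, hp, s, hs, rfl⟩ := hR i (interior_subset hxi)
  obtain ⟨q, hq, t, ht, hx⟩ := hR j (interior_subset hxj)
  have hpq : p = q := by
    refine eq_of_inner_sub_nonpos_of_inner_sub_nonpos (x := p + s • n i) ?_ ?_
    · simpa using inner_smul_sub_nonpos (hline i) hp hs (hsupp i q (hedge j hq))
    · simpa [hx] using inner_smul_sub_nonpos (hline j) hq ht (hsupp j p (hedge i hp))
  have hpi := mem_openSegment_of_add_smul_mem_interior_normalStrip (hab i) (hn0 i) (hline i) hp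
    (interior_mono (hR i) hxi)
  have hqj := mem_openSegment_of_add_smul_mem_interior_normalStrip (hab j) (hn0 j) (hline j) hq
    (hx ▸ interior_mono (hR j) hxj)
  exact (hdisj i j hij).subset ⟨hpi, hpq ▸ hqj⟩

/-- Non-overlap of fan-joined regions: regions attached outward along distinct edges of
a convex polygon, each contained in the outward normal strip over its base edge, have
disjoint interiors. Edges are given as segments `[a i, b i]` on the boundary of the
convex set `K`, supported by hyperplanes with outward unit normals `n i`, with pairwise
disjoint relative interiors. -/
theorem stmt_16 {ι : Type*} (K : Set (EuclideanSpace ℝ (Fin 2)))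
    (hK : Convex ℝ K) (hKc : IsClosed K)
    (a b : ι → EuclideanSpace ℝ (Fin 2)) (n : ι → EuclideanSpace ℝ (Fin 2))
    (R : ι → Set (EuclideanSpace ℝ (Fin 2)))
    (hedge : ∀ i, segment ℝ (a i) (b i) ⊆ K)
    (hab : ∀ i, a i ≠ b i)
    (hn : ∀ i, ‖n i‖ = 1)
    (hsupp : ∀ i, ∀ x ∈ K, ⟪x - a i, n i⟫ ≤ 0)
    (hline : ∀ i, ⟪b i - a i, n i⟫ = 0)
    (hdisj : ∀ i j, i ≠ j → openSegment ℝ (a i) (b i) ∩ openSegment ℝ (a j) (b j) = ∅)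
    (hR : ∀ i, R i ⊆ {x | ∃ p ∈ segment ℝ (a i) (b i), ∃ t : ℝ, 0 ≤ t ∧ x = p + t • n i}) :
    ∀ i j, i ≠ j → interior (R i) ∩ interior (R j) = ∅ :=
  stmt_16_general K a b n R hedge hab hn hsupp hline hdisj hR
end
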